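/- arXiv:1503.08093 — 2 statements merged into one kernel-verified Lean document; each statement's English description precedes it below -/
import Mathlib

section
/- Let G be a finite connected graph, F a spanning forest of G, and define the structure graph S(F) whose vertices are the connected components of F, with an edge between two distinct components c, c' whenever some edge of G joins a vertex of c to a vertex of c', weighted by the number of such edges of G. Then a set E' of edges of G, containing at most one edge between any pair of components of F and no edge within a component, satisfies that F ∪ E' is a spanning tree of G if and only if the corresponding set of edges of S(F) forms a spanning tree of S(F). -/
open SimpleGraph

/-- The structure graph of a spanning forest `F` of `G`: its vertices are the
connected components of `F`, and two distinct components are adjacent exactly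
when some edge of `G` joins them. -/
def structureGraph {V : Type*} (G F : SimpleGraph V) :
    SimpleGraph F.ConnectedComponent where
  Adj c c' := c ≠ c' ∧
    ∃ x y, G.Adj x y ∧ F.connectedComponentMk x = c ∧ F.connectedComponentMk y = c'
  symm := by
    constructor
    rintro c c' ⟨hne, x, y, hxy, hx, hy⟩
    exact ⟨hne.symm, y, x, hxy.symm, hy, hx⟩
  loopless := by constructor; rintro c ⟨hne, -⟩; exact hne rfl

namespace ForestCompletionAux

variable {V : Type*} {F : SimpleGraph V} {E' : Set (Sym2 V)}

private lemma adjQ (hnodiag : ∀ e ∈ E', ¬ (Sym2.map F.connectedComponentMk e).IsDiag)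
    {S : Set (Sym2 V)} (hS : S ⊆ E') {x y : V} (h : s(x, y) ∈ S) :
    (SimpleGraph.fromEdgeSet (Sym2.map F.connectedComponentMk '' S)).Adj
      (F.connectedComponentMk x) (F.connectedComponentMk y) := by
  rw [SimpleGraph.fromEdgeSet_adj]
  refine ⟨⟨s(x, y), h, Sym2.map_pair_eq _ _ _⟩, fun hEq => ?_⟩
  exact hnodiag _ (hS h) (by rw [Sym2.map_pair_eq]; exact Sym2.mk_isDiag_iff.mpr hEq)

private lemma proj_reach
    (hnodiag : ∀ e ∈ E', ¬ (Sym2.map F.connectedComponentMk e).IsDiag)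
    {S : Set (Sym2 V)} (hS : S ⊆ E') {u v : V}
    (w : (F ⊔ SimpleGraph.fromEdgeSet S).Walk u v) :
    (SimpleGraph.fromEdgeSet (Sym2.map F.connectedComponentMk '' S)).Reachable
      (F.connectedComponentMk u) (F.connectedComponentMk v) := by
  induction w with
  | nil => exact Reachable.refl _
  | cons h p ih =>
    simp only [SimpleGraph.sup_adj, SimpleGraph.fromEdgeSet_adj] at h
    rcases h with h | ⟨h, -⟩
    · rw [SimpleGraph.ConnectedComponent.connectedComponentMk_eq_of_adj h]
      exact ih
    · exact (adjQ hnodiag hS h).reachable.trans ih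

private lemma lift_reach {S : Set (Sym2 V)} {c d : F.ConnectedComponent}
    (w : (SimpleGraph.fromEdgeSet (Sym2.map F.connectedComponentMk '' S)).Walk c d) :
    ∀ {u v : V}, F.connectedComponentMk u = c → F.connectedComponentMk v = d →
      (F ⊔ SimpleGraph.fromEdgeSet S).Reachable u v := by
  induction w with
  | nil =>
    intro u v hu hv
    exact (SimpleGraph.ConnectedComponent.eq.mp (hu.trans hv.symm)).mono le_sup_left
  | @cons c₁ c₂ c₃ h p ih =>
    intro u v hu hv
    rw [SimpleGraph.fromEdgeSet_adj] at h
    obtain ⟨⟨e, heS, hmap⟩, hne⟩ := h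
    have key : ∀ x y : V, s(x, y) ∈ S → F.connectedComponentMk x = c₁ →
        F.connectedComponentMk y = c₂ →
        (F ⊔ SimpleGraph.fromEdgeSet S).Reachable u v := by
      intro x y hxyS hx hy
      have h1 : (F ⊔ SimpleGraph.fromEdgeSet S).Reachable u x :=
        (SimpleGraph.ConnectedComponent.eq.mp (hu.trans hx.symm)).mono le_sup_left
      have hxy : (F ⊔ SimpleGraph.fromEdgeSet S).Adj x y := by
        rw [SimpleGraph.sup_adj, SimpleGraph.fromEdgeSet_adj]
        exact Or.inr ⟨hxyS, fun hEq => hne (by rw [← hx, ← hy, hEq])⟩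
      exact h1.trans (hxy.reachable.trans (ih hy hv))
    induction e using Sym2.ind with
    | _ x y =>
      rw [Sym2.map_pair_eq, Sym2.eq_iff] at hmap
      rcases hmap with ⟨hx, hy⟩ | ⟨hx, hy⟩
      · exact key x y heS hx hy
      · exact key y x (Set.mem_of_eq_of_mem Sym2.eq_swap heS) hy hx

/-- The side of `a` in the forest `F` with the edge `s(a,b)` removed. -/
private def sideF (F : SimpleGraph V) (a b : V) : SimpleGraph V :=
  F \ SimpleGraph.fromEdgeSet {s(a, b)}

/-- For a component `d ≠ c` (where `c` is the component of `a`), whether the unique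
way `d` attaches to `c` in the component forest does so on the `a`-side. -/
private def fComp (F : SimpleGraph V) (E' : Set (Sym2 V)) (a b : V)
    (d : F.ConnectedComponent) : Prop :=
  ∃ x' y' : V, s(x', y') ∈ E' ∧ F.connectedComponentMk y' = F.connectedComponentMk a ∧
    (sideF F a b).Reachable a y' ∧
    ((SimpleGraph.fromEdgeSet (Sym2.map F.connectedComponentMk '' E')) \
      SimpleGraph.fromEdgeSet {e | F.connectedComponentMk a ∈ e}).Reachable
      d (F.connectedComponentMk x')

private def chi (F : SimpleGraph V) (E' : Set (Sym2 V)) (a b x : V) : Prop :=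
  (F.connectedComponentMk x = F.connectedComponentMk a ∧ (sideF F a b).Reachable a x) ∨
  (F.connectedComponentMk x ≠ F.connectedComponentMk a ∧
    fComp F E' a b (F.connectedComponentMk x))

private lemma chi_of_eq {a b x : V}
    (h : F.connectedComponentMk x = F.connectedComponentMk a) :
    chi F E' a b x ↔ (sideF F a b).Reachable a x :=
  ⟨fun hx => hx.elim (fun h' => h'.2) (fun h' => absurd h h'.1), fun hr => Or.inl ⟨h, hr⟩⟩

private lemma chi_of_ne {a b x : V}
    (h : F.connectedComponentMk x ≠ F.connectedComponentMk a) :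
    chi F E' a b x ↔ fComp F E' a b (F.connectedComponentMk x) :=
  ⟨fun hx => hx.elim (fun h' => absurd h'.1 h) (fun h' => h'.2), fun hr => Or.inr ⟨h, hr⟩⟩

private lemma fComp_iff
    (hnodiag : ∀ e ∈ E', ¬ (Sym2.map F.connectedComponentMk e).IsDiag)
    (hinj : Set.InjOn (Sym2.map F.connectedComponentMk) E')
    (hQac : (SimpleGraph.fromEdgeSet (Sym2.map F.connectedComponentMk '' E')).IsAcyclic)
    {a b x y : V} (hmem : s(x, y) ∈ E')
    (hyc : F.connectedComponentMk y = F.connectedComponentMk a)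
    (hxc : F.connectedComponentMk x ≠ F.connectedComponentMk a) :
    fComp F E' a b (F.connectedComponentMk x) ↔ (sideF F a b).Reachable a y := by
  constructor
  · rintro ⟨x', y', hmem', hy'c, hray', hQ₀r⟩
    by_cases heq : s(x', y') = s(x, y)
    · rcases Sym2.eq_iff.mp heq with ⟨hx', hy'⟩ | ⟨hx', hy'⟩
      · exact hy' ▸ hray'
      · exact absurd (hy' ▸ hy'c) hxc
    · exfalso
      have hx'c : F.connectedComponentMk x' ≠ F.connectedComponentMk a := by
        intro h
        exact hnodiag _ hmem'
          (by rw [Sym2.map_pair_eq]; exact Sym2.mk_isDiag_iff.mpr (h.trans hy'c.symm))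
      have hxx' : F.connectedComponentMk x' ≠ F.connectedComponentMk x := by
        intro h
        apply heq
        apply hinj hmem' hmem
        rw [Sym2.map_pair_eq, Sym2.map_pair_eq, h, hy'c, hyc]
      have hQadj : (SimpleGraph.fromEdgeSet
          (Sym2.map F.connectedComponentMk '' E')).Adj
          (F.connectedComponentMk x) (F.connectedComponentMk a) :=
        hyc ▸ adjQ hnodiag subset_rfl hmem
      refine (SimpleGraph.isBridge_iff.mp
        (isAcyclic_iff_forall_adj_isBridge.mp hQac hQadj)) ?_
      have hle : (SimpleGraph.fromEdgeSet (Sym2.map F.connectedComponentMk '' E')) \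
          SimpleGraph.fromEdgeSet {e | F.connectedComponentMk a ∈ e} ≤
          (SimpleGraph.fromEdgeSet (Sym2.map F.connectedComponentMk '' E')) \
          SimpleGraph.fromEdgeSet
            {s(F.connectedComponentMk x, F.connectedComponentMk a)} := by
        intro d₁ d₂ hd
        rw [SimpleGraph.sdiff_adj] at hd ⊢
        refine ⟨hd.1, fun hcon => hd.2 ?_⟩
        rw [SimpleGraph.fromEdgeSet_adj] at hcon ⊢
        rcases hcon with ⟨hm1, hne1⟩
        rw [Set.mem_singleton_iff] at hm1
        refine ⟨?_, hne1⟩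
        rw [hm1]
        exact Sym2.mem_mk_right _ _
      have step1 := Reachable.mono hle hQ₀r
      have step2 : ((SimpleGraph.fromEdgeSet (Sym2.map F.connectedComponentMk '' E')) \
          SimpleGraph.fromEdgeSet
            {s(F.connectedComponentMk x, F.connectedComponentMk a)}).Adj
          (F.connectedComponentMk x') (F.connectedComponentMk a) := by
        rw [SimpleGraph.sdiff_adj]
        refine ⟨hy'c ▸ adjQ hnodiag subset_rfl hmem', fun hcon => ?_⟩
        rw [SimpleGraph.fromEdgeSet_adj] at hcon
        rcases Sym2.eq_iff.mp (Set.mem_singleton_iff.mp hcon.1) with ⟨h1, -⟩ | ⟨h1, -⟩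
        · exact hxx' h1
        · exact hx'c h1
      exact step1.trans step2.reachable
  · intro h
    exact ⟨x, y, hmem, hyc, h, Reachable.refl _⟩

private lemma chi_adj
    (hnodiag : ∀ e ∈ E', ¬ (Sym2.map F.connectedComponentMk e).IsDiag)
    (hinj : Set.InjOn (Sym2.map F.connectedComponentMk) E')
    (hQac : (SimpleGraph.fromEdgeSet (Sym2.map F.connectedComponentMk '' E')).IsAcyclic)
    {a b x y : V}
    (hxy : ((F ⊔ SimpleGraph.fromEdgeSet E') \
      SimpleGraph.fromEdgeSet {s(a, b)}).Adj x y) :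
    chi F E' a b x ↔ chi F E' a b y := by
  rw [SimpleGraph.sdiff_adj] at hxy
  obtain ⟨hH, hnotd⟩ := hxy
  have hne_xy : x ≠ y := hH.ne
  have hne_e : s(x, y) ≠ s(a, b) := fun h => hnotd (by
    rw [SimpleGraph.fromEdgeSet_adj]
    exact ⟨Set.mem_singleton_iff.mpr h, hne_xy⟩)
  rw [SimpleGraph.sup_adj] at hH
  rcases hH with hFxy | hE
  · have hmxy : F.connectedComponentMk x = F.connectedComponentMk y :=
      SimpleGraph.ConnectedComponent.connectedComponentMk_eq_of_adj hFxy
    have hF₀xy : (sideF F a b).Adj x y := by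
      rw [sideF, SimpleGraph.sdiff_adj]
      refine ⟨hFxy, fun hcon => ?_⟩
      rw [SimpleGraph.fromEdgeSet_adj] at hcon
      exact hne_e (Set.mem_singleton_iff.mp hcon.1)
    by_cases hmx : F.connectedComponentMk x = F.connectedComponentMk a
    · rw [chi_of_eq hmx, chi_of_eq (hmxy.symm.trans hmx)]
      exact ⟨fun h => h.trans hF₀xy.reachable, fun h => h.trans hF₀xy.symm.reachable⟩
    · rw [chi_of_ne hmx, chi_of_ne (fun h => hmx (hmxy.trans h)), hmxy]
  · rw [SimpleGraph.fromEdgeSet_adj] at hE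
    obtain ⟨hmem, -⟩ := hE
    have hmne : F.connectedComponentMk x ≠ F.connectedComponentMk y := fun h =>
      hnodiag _ hmem (by rw [Sym2.map_pair_eq]; exact Sym2.mk_isDiag_iff.mpr h)
    by_cases hmx : F.connectedComponentMk x = F.connectedComponentMk a
    · have hmy : F.connectedComponentMk y ≠ F.connectedComponentMk a :=
        fun h => hmne (hmx.trans h.symm)
      rw [chi_of_eq hmx, chi_of_ne hmy]
      exact (fComp_iff hnodiag hinj hQac
        (Set.mem_of_eq_of_mem Sym2.eq_swap hmem) hmx hmy).symm
    · by_cases hmy : F.connectedComponentMk y = F.connectedComponentMk a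
      · rw [chi_of_ne hmx, chi_of_eq hmy]
        exact fComp_iff hnodiag hinj hQac hmem hmy hmx
      · rw [chi_of_ne hmx, chi_of_ne hmy]
        have hQ₀adj : ((SimpleGraph.fromEdgeSet
            (Sym2.map F.connectedComponentMk '' E')) \
            SimpleGraph.fromEdgeSet {e | F.connectedComponentMk a ∈ e}).Adj
            (F.connectedComponentMk x) (F.connectedComponentMk y) := by
          rw [SimpleGraph.sdiff_adj]
          refine ⟨adjQ hnodiag subset_rfl hmem, fun hcon => ?_⟩
          rw [SimpleGraph.fromEdgeSet_adj] at hcon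
          rcases Sym2.mem_iff'.mp hcon.1 with h | h
          · exact hmx h.symm
          · exact hmy h.symm
        constructor
        · rintro ⟨x', y', h1, h2, h3, h4⟩
          exact ⟨x', y', h1, h2, h3, hQ₀adj.symm.reachable.trans h4⟩
        · rintro ⟨x', y', h1, h2, h3, h4⟩
          exact ⟨x', y', h1, h2, h3, hQ₀adj.reachable.trans h4⟩

private lemma hard_case (hF : F.IsAcyclic)
    (hnodiag : ∀ e ∈ E', ¬ (Sym2.map F.connectedComponentMk e).IsDiag)
    (hinj : Set.InjOn (Sym2.map F.connectedComponentMk) E')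
    (hQac : (SimpleGraph.fromEdgeSet (Sym2.map F.connectedComponentMk '' E')).IsAcyclic)
    {a b : V} (hFab : F.Adj a b) :
    ¬ ((F ⊔ SimpleGraph.fromEdgeSet E') \
        SimpleGraph.fromEdgeSet {s(a, b)}).Reachable a b := by
  intro r
  obtain ⟨w⟩ := r
  have hinv : ∀ {u v : V}
      (_ : ((F ⊔ SimpleGraph.fromEdgeSet E') \
        SimpleGraph.fromEdgeSet {s(a, b)}).Walk u v),
      chi F E' a b u ↔ chi F E' a b v := by
    intro u v w
    induction w with
    | nil => exact Iff.rfl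
    | cons h p ih => exact (chi_adj hnodiag hinj hQac h).trans ih
  have hχa : chi F E' a b a := Or.inl ⟨rfl, Reachable.refl _⟩
  have hχb := (hinv w).mp hχa
  rw [chi_of_eq (SimpleGraph.ConnectedComponent.connectedComponentMk_eq_of_adj hFab).symm] at hχb
  rw [sideF] at hχb
  exact (SimpleGraph.isBridge_iff.mp
    (isAcyclic_iff_forall_adj_isBridge.mp hF hFab)) hχb

private lemma H_bridge_cross
    (hnodiag : ∀ e ∈ E', ¬ (Sym2.map F.connectedComponentMk e).IsDiag)
    (hinj : Set.InjOn (Sym2.map F.connectedComponentMk) E')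
    (hQac : (SimpleGraph.fromEdgeSet (Sym2.map F.connectedComponentMk '' E')).IsAcyclic)
    {a b : V} (hmem : s(a, b) ∈ E') :
    ¬ ((F ⊔ SimpleGraph.fromEdgeSet E') \
        SimpleGraph.fromEdgeSet {s(a, b)}).Reachable a b := by
  intro r
  have hQadj := adjQ hnodiag subset_rfl hmem
  refine (SimpleGraph.isBridge_iff.mp
    (isAcyclic_iff_forall_adj_isBridge.mp hQac hQadj)) ?_
  have hle1 : (F ⊔ SimpleGraph.fromEdgeSet E') \
      SimpleGraph.fromEdgeSet {s(a, b)} ≤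
      F ⊔ SimpleGraph.fromEdgeSet (E' \ {s(a, b)}) := by
    intro p q hpq
    rw [SimpleGraph.sdiff_adj, SimpleGraph.sup_adj] at hpq
    obtain ⟨hH, hnot⟩ := hpq
    rw [SimpleGraph.sup_adj, SimpleGraph.fromEdgeSet_adj]
    rcases hH with h | h
    · exact Or.inl h
    · rw [SimpleGraph.fromEdgeSet_adj] at h
      refine Or.inr ⟨⟨h.1, fun hs => hnot ?_⟩, h.2⟩
      rw [SimpleGraph.fromEdgeSet_adj]
      exact ⟨hs, h.2⟩
  obtain ⟨w2⟩ := Reachable.mono hle1 r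
  refine (proj_reach hnodiag Set.diff_subset w2).mono ?_
  intro d₁ d₂ hd
  rw [SimpleGraph.fromEdgeSet_adj] at hd
  obtain ⟨⟨e₁, he₁, hmap⟩, hdne⟩ := hd
  obtain ⟨he₁E, he₁ne⟩ := he₁
  rw [SimpleGraph.deleteEdges, SimpleGraph.sdiff_adj, SimpleGraph.fromEdgeSet_adj, SimpleGraph.fromEdgeSet_adj]
  refine ⟨⟨⟨e₁, he₁E, hmap⟩, hdne⟩, fun hcon => ?_⟩
  apply he₁ne
  rw [Set.mem_singleton_iff]
  exact hinj he₁E hmem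
    (by rw [hmap, Set.mem_singleton_iff.mp hcon.1, Sym2.map_pair_eq])

private lemma Q_bridge
    (hnodiag : ∀ e ∈ E', ¬ (Sym2.map F.connectedComponentMk e).IsDiag)
    (hinj : Set.InjOn (Sym2.map F.connectedComponentMk) E')
    (hHac : (F ⊔ SimpleGraph.fromEdgeSet E').IsAcyclic)
    {x y : V} (hmem : s(x, y) ∈ E') :
    ¬ ((SimpleGraph.fromEdgeSet (Sym2.map F.connectedComponentMk '' E')) \
        SimpleGraph.fromEdgeSet
          {s(F.connectedComponentMk x, F.connectedComponentMk y)}).Reachable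
      (F.connectedComponentMk x) (F.connectedComponentMk y) := by
  intro r
  have hmne : F.connectedComponentMk x ≠ F.connectedComponentMk y := fun h =>
    hnodiag _ hmem (by rw [Sym2.map_pair_eq]; exact Sym2.mk_isDiag_iff.mpr h)
  have hHadj : (F ⊔ SimpleGraph.fromEdgeSet E').Adj x y := by
    rw [SimpleGraph.sup_adj, SimpleGraph.fromEdgeSet_adj]
    exact Or.inr ⟨hmem, fun h => hmne (congrArg _ h)⟩
  refine (SimpleGraph.isBridge_iff.mp
    (isAcyclic_iff_forall_adj_isBridge.mp hHac hHadj)) ?_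
  have hle : (SimpleGraph.fromEdgeSet (Sym2.map F.connectedComponentMk '' E')) \
      SimpleGraph.fromEdgeSet
        {s(F.connectedComponentMk x, F.connectedComponentMk y)} ≤
      SimpleGraph.fromEdgeSet (Sym2.map F.connectedComponentMk '' (E' \ {s(x, y)})) := by
    intro d₁ d₂ hd
    rw [SimpleGraph.sdiff_adj, SimpleGraph.fromEdgeSet_adj,
      SimpleGraph.fromEdgeSet_adj] at hd
    obtain ⟨⟨⟨e₁, he₁E, hmap⟩, hdne⟩, hnot⟩ := hd
    rw [SimpleGraph.fromEdgeSet_adj]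
    refine ⟨⟨e₁, ⟨he₁E, fun hs => ?_⟩, hmap⟩, hdne⟩
    apply hnot
    rw [Set.mem_singleton_iff] at hs
    refine ⟨Set.mem_singleton_iff.mpr ?_, hdne⟩
    rw [← hmap, hs, Sym2.map_pair_eq]
  obtain ⟨w2⟩ := Reachable.mono hle r
  have r3 := lift_reach w2 rfl rfl
  refine Reachable.mono ?_ r3
  intro p q hpq
  rw [SimpleGraph.sup_adj, SimpleGraph.fromEdgeSet_adj] at hpq
  rw [SimpleGraph.deleteEdges, SimpleGraph.sdiff_adj, SimpleGraph.sup_adj, SimpleGraph.fromEdgeSet_adj,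
    SimpleGraph.fromEdgeSet_adj]
  rcases hpq with h | ⟨⟨h1, h2⟩, hne⟩
  · refine ⟨Or.inl h, fun hcon => ?_⟩
    obtain ⟨hs, -⟩ := hcon
    rw [Set.mem_singleton_iff] at hs
    have hpqc := SimpleGraph.ConnectedComponent.connectedComponentMk_eq_of_adj h
    rcases Sym2.eq_iff.mp hs with ⟨h3, h4⟩ | ⟨h3, h4⟩
    · exact hmne (by rw [← h3, ← h4]; exact hpqc)
    · subst h3; subst h4; exact hmne hpqc.symm
  · refine ⟨Or.inr ⟨h1, hne⟩, fun hcon => h2 hcon.1⟩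

end ForestCompletionAux

open ForestCompletionAux in
/-- Let `F` be a spanning forest of a finite connected graph
`G` and let `E'` be a set of edges of `G` containing no edge inside a component
of `F` and at most one edge between any pair of components.  Then `F ∪ E'` is
a spanning tree of `G` if and only if the image of `E'` in the structure graph
`S(F)` forms a spanning tree of `S(F)`. -/
theorem forest_completion_iff_structureGraph_tree {V : Type*} [Fintype V]
    (G : SimpleGraph V) (hG : G.Connected)
    (F : SimpleGraph V) (hFG : F ≤ G) (hF : F.IsAcyclic)
    (E' : Set (Sym2 V)) (hE' : E' ⊆ G.edgeSet)
    (hnodiag : ∀ e ∈ E', ¬ (Sym2.map F.connectedComponentMk e).IsDiag)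
    (hinj : Set.InjOn (Sym2.map F.connectedComponentMk) E') :
    (F ⊔ SimpleGraph.fromEdgeSet E').IsTree ↔
      (SimpleGraph.fromEdgeSet
        (Sym2.map F.connectedComponentMk '' E')).IsTree := by
  constructor
  · rintro ⟨hconn, hac⟩
    constructor
    · have hne : Nonempty V := hconn.nonempty
      haveI : Nonempty F.ConnectedComponent :=
        ⟨F.connectedComponentMk (Classical.arbitrary V)⟩
      refine SimpleGraph.Connected.mk fun c d => ?_
      obtain ⟨u, hu⟩ := c.exists_rep
      obtain ⟨v, hv⟩ := d.exists_rep
      rw [← hu, ← hv]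
      obtain ⟨w⟩ := hconn.preconnected u v
      exact proj_reach hnodiag subset_rfl w
    · rw [isAcyclic_iff_forall_adj_isBridge]
      intro c d h
      rw [SimpleGraph.isBridge_iff]
      obtain ⟨⟨e, heE, hmap⟩, hne⟩ := (SimpleGraph.fromEdgeSet_adj _).mp h
      induction e using Sym2.ind with
      | _ x y =>
        rw [Sym2.map_pair_eq, Sym2.eq_iff] at hmap
        rcases hmap with ⟨h1, h2⟩ | ⟨h1, h2⟩
        · rw [← h1, ← h2]
          exact Q_bridge hnodiag hinj hac heE
        · rw [← h1, ← h2, Sym2.eq_swap]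
          exact fun r => Q_bridge hnodiag hinj hac heE r.symm
  · rintro ⟨hconn, hac⟩
    constructor
    · have hneV : Nonempty V := by
        obtain ⟨c⟩ := hconn.nonempty
        obtain ⟨v, -⟩ := c.exists_rep
        exact ⟨v⟩
      refine SimpleGraph.Connected.mk fun u v => ?_
      obtain ⟨w⟩ := hconn.preconnected
        (F.connectedComponentMk u) (F.connectedComponentMk v)
      exact lift_reach w rfl rfl
    · rw [isAcyclic_iff_forall_adj_isBridge]
      intro p q hpq
      rw [SimpleGraph.isBridge_iff]
      by_cases hFpq : F.Adj p q
      · exact hard_case hF hnodiag hinj hac hFpq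
      · have hmem : s(p, q) ∈ E' := by
          rcases (SimpleGraph.sup_adj _ _ _ _).mp hpq with h | h
          · exact absurd h hFpq
          · exact ((SimpleGraph.fromEdgeSet_adj _).mp h).1
        exact H_bridge_cross hnodiag hinj hac hmem
end

section
/- Let G be a finite connected graph and F a spanning forest of G. Sample a uniform spanning tree T of G conditioned to contain all edges of F, and let E' = T \ F be the set of added edges. Then the image of E' in the structure graph S(F) (mapping each added edge to the pair of components of F it connects) is distributed as the weighted spanning tree on S(F), i.e. the probability of obtaining a given spanning tree τ of S(F) is proportional to the product over the edges (c,c') of τ of the weight w(c,c') (the number of edges of G between c and c'). -/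
open SimpleGraph
open scoped Classical

/-- The weight of an edge of the structure graph: the number of edges of `G`
joining the two corresponding components of `F`. -/
noncomputable def structureWeight {V : Type*} (G F : SimpleGraph V)
    (ε : Sym2 F.ConnectedComponent) : ℕ :=
  {e ∈ G.edgeSet | Sym2.map F.connectedComponentMk e = ε}.ncard

section Auxiliary

variable {V : Type*}

lemma walk_transfer_aux {H : SimpleGraph V} {a b x y : V} (p : H.Walk x y) :
    (H \ fromEdgeSet {s(a,b)}).Reachable x y ∨
      (((H \ fromEdgeSet {s(a,b)}).Reachable x a ∨ (H \ fromEdgeSet {s(a,b)}).Reachable x b) ∧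
       ((H \ fromEdgeSet {s(a,b)}).Reachable y a ∨ (H \ fromEdgeSet {s(a,b)}).Reachable y b)) := by
  set H' := H \ fromEdgeSet {s(a,b)} with hH'
  induction p with
  | nil => exact Or.inl (Reachable.refl _)
  | @cons x w y h q ih =>
    by_cases hsx : s(x, w) = s(a, b)
    · rw [Sym2.eq_iff] at hsx
      have hxside : H'.Reachable x a ∨ H'.Reachable x b := by
        rcases hsx with ⟨rfl, rfl⟩ | ⟨rfl, rfl⟩
        · exact Or.inl (Reachable.refl _)
        · exact Or.inr (Reachable.refl _)
      have hwside : H'.Reachable w a ∨ H'.Reachable w b := by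
        rcases hsx with ⟨rfl, rfl⟩ | ⟨rfl, rfl⟩
        · exact Or.inr (Reachable.refl _)
        · exact Or.inl (Reachable.refl _)
      refine Or.inr ⟨hxside, ?_⟩
      rcases ih with hr | ⟨_, hy⟩
      · rcases hwside with h1 | h1
        · exact Or.inl (hr.symm.trans h1)
        · exact Or.inr (hr.symm.trans h1)
      · exact hy
    · have hadj : H'.Adj x w := by
        rw [hH', sdiff_adj]
        exact ⟨h, by simp [fromEdgeSet_adj, hsx]⟩
      rcases ih with hr | ⟨hw, hy⟩
      · exact Or.inl (hadj.reachable.trans hr)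
      · refine Or.inr ⟨?_, hy⟩
        rcases hw with h1 | h1
        · exact Or.inl (hadj.reachable.trans h1)
        · exact Or.inr (hadj.reachable.trans h1)

lemma acyclic_mono {H H' : SimpleGraph V} (hle : H' ≤ H) (hH : H.IsAcyclic) : H'.IsAcyclic := by
  intro u p hp
  exact hH (p.transfer H (fun e he => edgeSet_mono hle (p.edges_subset_edgeSet he)))
    (hp.transfer _)

lemma card_cc_delete_le [Fintype V] {H : SimpleGraph V} {a b : V} (hab : H.Adj a b) :
    Nat.card (H \ fromEdgeSet {s(a,b)}).ConnectedComponent ≤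
      Nat.card H.ConnectedComponent + 1 := by
  classical
  set H' := H \ fromEdgeSet {s(a,b)} with hH'
  have hle : H' ≤ H := sdiff_le
  let m : H'.ConnectedComponent → H.ConnectedComponent :=
    ConnectedComponent.map (Hom.ofLE hle)
  have hm : ∀ x : V, m (H'.connectedComponentMk x) = H.connectedComponentMk x := fun x => rfl
  let g : H'.ConnectedComponent → H.ConnectedComponent ⊕ Unit :=
    fun c => if c = H'.connectedComponentMk b then Sum.inr () else Sum.inl (m c)
  have hginj : Function.Injective g := by
    intro c1 c2 hg
    by_cases h1 : c1 = H'.connectedComponentMk b <;>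
      by_cases h2 : c2 = H'.connectedComponentMk b
    · rw [h1, h2]
    · simp only [g, if_pos h1, if_neg h2] at hg; exact absurd hg (by simp)
    · simp only [g, if_neg h1, if_pos h2] at hg; exact absurd hg (by simp)
    · simp only [g, if_neg h1, if_neg h2, Sum.inl.injEq] at hg
      revert h1 h2 hg
      refine ConnectedComponent.ind₂ (fun x y h1 h2 hg => ?_) c1 c2
      rw [hm, hm, ConnectedComponent.eq] at hg
      obtain ⟨p⟩ := hg
      rcases walk_transfer_aux (a := a) (b := b) p with hr | ⟨hx, hy⟩
      · exact ConnectedComponent.sound hr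
      · replace hx : H'.Reachable x a := by
          rcases hx with h' | h'
          · exact h'
          · exact absurd (ConnectedComponent.sound h') h1
        replace hy : H'.Reachable y a := by
          rcases hy with h' | h'
          · exact h'
          · exact absurd (ConnectedComponent.sound h') h2
        exact ConnectedComponent.sound (hx.trans hy.symm)
  calc Nat.card H'.ConnectedComponent ≤ Nat.card (H.ConnectedComponent ⊕ Unit) :=
        Nat.card_le_card_of_injective g hginj
    _ = Nat.card H.ConnectedComponent + 1 := by simp [Nat.card_sum]

lemma card_cc_delete_eq [Fintype V] {H : SimpleGraph V} {a b : V} (hab : H.Adj a b)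
    (hnr : ¬(H \ fromEdgeSet {s(a,b)}).Reachable a b) :
    Nat.card (H \ fromEdgeSet {s(a,b)}).ConnectedComponent =
      Nat.card H.ConnectedComponent + 1 := by
  classical
  set H' := H \ fromEdgeSet {s(a,b)} with hH'
  have hle : H' ≤ H := sdiff_le
  let m : H'.ConnectedComponent → H.ConnectedComponent :=
    ConnectedComponent.map (Hom.ofLE hle)
  have hm : ∀ x : V, m (H'.connectedComponentMk x) = H.connectedComponentMk x := fun x => rfl
  let g : H'.ConnectedComponent → H.ConnectedComponent ⊕ Unit :=
    fun c => if c = H'.connectedComponentMk b then Sum.inr () else Sum.inl (m c)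
  have hginj : Function.Injective g := by
    intro c1 c2 hg
    by_cases h1 : c1 = H'.connectedComponentMk b <;>
      by_cases h2 : c2 = H'.connectedComponentMk b
    · rw [h1, h2]
    · simp only [g, if_pos h1, if_neg h2] at hg; exact absurd hg (by simp)
    · simp only [g, if_neg h1, if_pos h2] at hg; exact absurd hg (by simp)
    · simp only [g, if_neg h1, if_neg h2, Sum.inl.injEq] at hg
      revert h1 h2 hg
      refine ConnectedComponent.ind₂ (fun x y h1 h2 hg => ?_) c1 c2
      rw [hm, hm, ConnectedComponent.eq] at hg
      obtain ⟨p⟩ := hg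
      rcases walk_transfer_aux (a := a) (b := b) p with hr | ⟨hx, hy⟩
      · exact ConnectedComponent.sound hr
      · replace hx : H'.Reachable x a := by
          rcases hx with h' | h'
          · exact h'
          · exact absurd (ConnectedComponent.sound h') h1
        replace hy : H'.Reachable y a := by
          rcases hy with h' | h'
          · exact h'
          · exact absurd (ConnectedComponent.sound h') h2
        exact ConnectedComponent.sound (hx.trans hy.symm)
  have hgsurj : Function.Surjective g := by
    rintro (c | u)
    · revert c
      refine ConnectedComponent.ind (fun x => ?_)
      by_cases hx : H'.connectedComponentMk x = H'.connectedComponentMk b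
      · refine ⟨H'.connectedComponentMk a, ?_⟩
        have hne : H'.connectedComponentMk a ≠ H'.connectedComponentMk b :=
          fun h => hnr (ConnectedComponent.exact h)
        simp only [g, if_neg hne, hm]
        congr 1
        rw [ConnectedComponent.eq] at hx ⊢
        exact hab.reachable.trans (hx.mono hle).symm
      · exact ⟨H'.connectedComponentMk x, by simp only [g, if_neg hx, hm]⟩
    · exact ⟨H'.connectedComponentMk b, by simp [g]⟩
  have := Nat.card_eq_of_bijective g ⟨hginj, hgsurj⟩
  simpa [Nat.card_sum] using this

lemma ncard_edgeSet [Fintype V] (H : SimpleGraph V) : H.edgeSet.ncard = H.edgeFinset.card := by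
  rw [← coe_edgeFinset, Set.ncard_coe_finset]

lemma edgeSet_sdiff_singleton {H : SimpleGraph V} {a b : V} (hab : H.Adj a b) :
    (H \ fromEdgeSet {s(a,b)}).edgeSet = H.edgeSet \ {s(a,b)} := by
  ext e
  simp only [edgeSet_sdiff, edgeSet_fromEdgeSet, Set.mem_diff, Set.mem_setOf_eq,
    Set.mem_singleton_iff]
  constructor
  · rintro ⟨he, hne⟩
    exact ⟨he, fun h => hne ⟨h, by rw [h]; simp [hab.ne]⟩⟩
  · rintro ⟨he, hne⟩
    exact ⟨he, fun h => hne h.1⟩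

lemma card_cc_bot [Fintype V] :
    Nat.card (⊥ : SimpleGraph V).ConnectedComponent = Nat.card V := by
  refine (Nat.card_eq_of_bijective (⊥ : SimpleGraph V).connectedComponentMk ⟨?_, ?_⟩).symm
  · intro x y h
    exact reachable_bot.mp (ConnectedComponent.exact h)
  · exact fun c => c.exists_rep

lemma card_le_cc_add_edges_aux [Fintype V] :
    ∀ (n : ℕ) (H : SimpleGraph V), H.edgeSet.ncard = n →
      Nat.card V ≤ Nat.card H.ConnectedComponent + n := by
  intro n
  induction n with
  | zero =>
    intro H hn
    have : H = ⊥ := by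
      rw [← edgeSet_eq_empty]
      exact (Set.ncard_eq_zero (H.edgeSet.toFinite)).mp hn
    subst this
    rw [Nat.add_zero, card_cc_bot]
  | succ n ih =>
    intro H hn
    have hne : H.edgeSet.Nonempty := by
      rw [Set.nonempty_iff_ne_empty]
      intro h
      rw [h] at hn; simp at hn
    obtain ⟨e, he⟩ := hne
    induction e using Sym2.ind with
    | _ a b =>
    have hab : H.Adj a b := he
    have hcard : (H \ fromEdgeSet {s(a,b)}).edgeSet.ncard = n := by
      rw [edgeSet_sdiff_singleton hab, Set.ncard_diff_singleton_of_mem he, hn]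
      omega
    have h1 := ih (H \ fromEdgeSet {s(a,b)}) hcard
    have h2 := card_cc_delete_le hab
    omega

lemma card_le_cc_add_edges [Fintype V] (H : SimpleGraph V) :
    Nat.card V ≤ Nat.card H.ConnectedComponent + H.edgeSet.ncard :=
  card_le_cc_add_edges_aux _ H rfl

lemma acyclic_card_aux [Fintype V] :
    ∀ (n : ℕ) (H : SimpleGraph V), H.IsAcyclic → H.edgeSet.ncard = n →
      Nat.card H.ConnectedComponent + n = Nat.card V := by
  intro n
  induction n with
  | zero =>
    intro H _ hn
    have : H = ⊥ := by
      rw [← edgeSet_eq_empty]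
      exact (Set.ncard_eq_zero (H.edgeSet.toFinite)).mp hn
    subst this
    rw [Nat.add_zero, card_cc_bot]
  | succ n ih =>
    intro H hH hn
    have hne : H.edgeSet.Nonempty := by
      rw [Set.nonempty_iff_ne_empty]
      intro h
      rw [h] at hn; simp at hn
    obtain ⟨e, he⟩ := hne
    induction e using Sym2.ind with
    | _ a b =>
    have hab : H.Adj a b := he
    have hbridge : H.IsBridge s(a,b) := (isAcyclic_iff_forall_edge_isBridge.mp hH) he
    have hnr : ¬(H \ fromEdgeSet {s(a,b)}).Reachable a b := isBridge_iff.mp hbridge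
    have hcard : (H \ fromEdgeSet {s(a,b)}).edgeSet.ncard = n := by
      rw [edgeSet_sdiff_singleton hab, Set.ncard_diff_singleton_of_mem he, hn]
      omega
    have h1 := ih (H \ fromEdgeSet {s(a,b)}) (acyclic_mono sdiff_le hH) hcard
    have h2 := card_cc_delete_eq hab hnr
    omega

/-- For a finite acyclic graph, #components + #edges = #vertices. -/
lemma acyclic_card [Fintype V] {H : SimpleGraph V} (hH : H.IsAcyclic) :
    Nat.card H.ConnectedComponent + H.edgeSet.ncard = Nat.card V :=
  acyclic_card_aux _ H hH rfl

lemma card_cc_connected {H : SimpleGraph V} (hc : H.Connected) :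
    Nat.card H.ConnectedComponent = 1 := by
  rw [Nat.card_eq_one_iff_unique]
  constructor
  · constructor
    intro c1 c2
    refine ConnectedComponent.ind₂ (fun x y => ?_) c1 c2
    exact ConnectedComponent.sound (hc.preconnected x y)
  · have : Nonempty V := hc.nonempty
    exact ⟨H.connectedComponentMk (Classical.arbitrary V)⟩

lemma isTree_of_connected_of_ncard_le [Fintype V] {H : SimpleGraph V} (hc : H.Connected)
    (hcard : H.edgeSet.ncard + 1 ≤ Nat.card V) : H.IsTree := by
  refine ⟨hc, ?_⟩
  intro w p hp
  cases p with
  | nil => exact hp.ne_nil rfl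
  | @cons _ v _ h q =>
    have he : s(w, v) ∈ (Walk.cons h q).edges := by simp
    have hnb : ¬H.IsBridge s(w, v) := fun hb =>
      (isBridge_iff_forall_cycle_notMem h).mp hb _ hp he
    have hr : (H \ fromEdgeSet {s(w,v)}).Reachable w v := by
      rw [isBridge_iff] at hnb
      push_neg at hnb
      exact hnb
    have hpre : (H \ fromEdgeSet {s(w,v)}).Preconnected := by
      intro x y
      obtain ⟨p0⟩ := hc.preconnected x y
      rcases walk_transfer_aux (a := w) (b := v) p0 with h1 | ⟨hx, hy⟩
      · exact h1
      · have hx' : (H \ fromEdgeSet {s(w,v)}).Reachable x w := by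
          rcases hx with h' | h'
          · exact h'
          · exact h'.trans hr.symm
        have hy' : (H \ fromEdgeSet {s(w,v)}).Reachable y w := by
          rcases hy with h' | h'
          · exact h'
          · exact h'.trans hr.symm
        exact hx'.trans hy'.symm
    have hconn : (H \ fromEdgeSet {s(w,v)}).Connected := by
      rw [connected_iff]; exact ⟨hpre, hc.nonempty⟩
    have h1 := card_le_cc_add_edges (H \ fromEdgeSet {s(w,v)})
    rw [card_cc_connected hconn] at h1
    have h2 : (H \ fromEdgeSet {s(w,v)}).edgeSet.ncard = H.edgeSet.ncard - 1 := by
      rw [edgeSet_sdiff_singleton h,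
        Set.ncard_diff_singleton_of_mem (show s(w,v) ∈ H.edgeSet from h)]
    have h3 : 0 < H.edgeSet.ncard := (Set.ncard_pos (H.edgeSet.toFinite)).mpr ⟨s(w,v), h⟩
    omega

lemma quot_reachable {F T : SimpleGraph V} {Q : SimpleGraph F.ConnectedComponent}
    (hadj : ∀ x y, T.Adj x y → F.connectedComponentMk x = F.connectedComponentMk y ∨
      Q.Adj (F.connectedComponentMk x) (F.connectedComponentMk y))
    {x y : V} (h : T.Reachable x y) :
    Q.Reachable (F.connectedComponentMk x) (F.connectedComponentMk y) := by
  obtain ⟨p⟩ := h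
  induction p with
  | nil => exact Reachable.refl _
  | cons h q ih =>
    rcases hadj _ _ h with heq | hQ
    · rw [heq]; exact ih
    · exact hQ.reachable.trans ih

lemma adj_mem_of_reachable {F T : SimpleGraph V} (hT : T.IsAcyclic) (hFT : F ≤ T)
    {x y : V} (hxy : T.Adj x y) (hr : F.Reachable x y) : s(x, y) ∈ F.edgeSet := by
  classical
  obtain ⟨p0⟩ := hr
  let q : F.Path x y := p0.toPath
  have hsub : ∀ e ∈ (q : F.Walk x y).edges, e ∈ T.edgeSet :=
    fun e he => edgeSet_mono hFT ((q : F.Walk x y).edges_subset_edgeSet he)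
  let q' : T.Path x y := ⟨(q : F.Walk x y).transfer T hsub, q.2.transfer hsub⟩
  have huniq : Path.singleton hxy = q' := hT.path_unique _ _
  have hmem : s(x, y) ∈ ((Path.singleton hxy : T.Path x y) : T.Walk x y).edges := by
    simp [Path.singleton]
  rw [huniq] at hmem
  have : s(x, y) ∈ (q : F.Walk x y).edges := by
    rwa [show (q' : T.Walk x y).edges = (q : F.Walk x y).edges from Walk.edges_transfer _ _] at hmem
  exact (q : F.Walk x y).edges_subset_edgeSet this

lemma lift_reachable {F T : SimpleGraph V} {τ : SimpleGraph F.ConnectedComponent} (hFT : F ≤ T)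
    (hlift : ∀ c c', τ.Adj c c' → ∃ u v, T.Adj u v ∧
      F.connectedComponentMk u = c ∧ F.connectedComponentMk v = c')
    {c c' : F.ConnectedComponent} (h : τ.Reachable c c') {x y : V}
    (hx : F.connectedComponentMk x = c) (hy : F.connectedComponentMk y = c') :
    T.Reachable x y := by
  obtain ⟨p⟩ := h
  induction p generalizing x y with
  | nil => exact Reachable.mono hFT (ConnectedComponent.exact (hx.trans hy.symm))
  | @cons c d c' h q ih =>
    obtain ⟨u, v, huv, hu, hv⟩ := hlift _ _ h
    have h1 : T.Reachable x u :=
      Reachable.mono hFT (ConnectedComponent.exact (hx.trans hu.symm))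
    exact (h1.trans huv.reachable).trans (ih hv hy)

lemma map_isDiag {α β : Type*} (g : α → β) {e : Sym2 α} (h : e.IsDiag) :
    (Sym2.map g e).IsDiag := by
  induction e using Sym2.ind with
  | _ x y =>
    rw [Sym2.mk_isDiag_iff] at h
    rw [Sym2.map_pair_eq, Sym2.mk_isDiag_iff, h]

lemma tree_ext {F T : SimpleGraph V} (hFT : F ≤ T) :
    F ⊔ fromEdgeSet (T.edgeSet \ F.edgeSet) = T := by
  rw [← edgeSet_inj, edgeSet_sup, edgeSet_fromEdgeSet]
  ext e
  simp only [Set.mem_union, Set.mem_diff, Set.mem_setOf_eq]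
  constructor
  · rintro (h | ⟨⟨h, _⟩, _⟩)
    exacts [edgeSet_mono hFT h, h]
  · intro h
    by_cases hFe : e ∈ F.edgeSet
    · exact Or.inl hFe
    · exact Or.inr ⟨⟨h, hFe⟩, T.not_isDiag_of_mem_edgeSet h⟩

lemma injOn_of_ncard_image {α β : Type*} {f : α → β} {s : Set α} (hs : s.Finite)
    (h : (f '' s).ncard = s.ncard) : Set.InjOn f s := by
  intro e1 h1 e2 h2 hf
  by_contra hne
  have hsub : f '' s = f '' (s \ {e1}) := by
    apply Set.Subset.antisymm
    · rintro b ⟨a, ha, rfl⟩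
      by_cases hae : a = e1
      · refine ⟨e2, ⟨h2, fun h => hne (Set.mem_singleton_iff.mp h).symm⟩, by rw [← hf, hae]⟩
      · exact ⟨a, ⟨ha, hae⟩, rfl⟩
    · exact Set.image_mono Set.diff_subset
  have h1' : (f '' (s \ {e1})).ncard ≤ (s \ {e1}).ncard := Set.ncard_image_le hs.diff
  have h2' : (s \ {e1}).ncard = s.ncard - 1 := Set.ncard_diff_singleton_of_mem h1
  have h3' : 0 < s.ncard := (Set.ncard_pos hs).mpr ⟨e1, h1⟩
  rw [hsub] at h
  omega

lemma build_tree [Fintype V] {G F : SimpleGraph V} (hG : G.Connected) (hFG : F ≤ G)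
    (hF : F.IsAcyclic) {τ : SimpleGraph F.ConnectedComponent}
    (hτ : τ.IsTree) (f : Sym2 F.ConnectedComponent → Sym2 V)
    (hf : ∀ ε ∈ τ.edgeSet, f ε ∈ G.edgeSet ∧ Sym2.map F.connectedComponentMk (f ε) = ε) :
    (F ⊔ fromEdgeSet (f '' τ.edgeSet)) ≤ G ∧ (F ⊔ fromEdgeSet (f '' τ.edgeSet)).IsTree ∧
    F ≤ (F ⊔ fromEdgeSet (f '' τ.edgeSet)) ∧
    (F ⊔ fromEdgeSet (f '' τ.edgeSet)).edgeSet \ F.edgeSet = f '' τ.edgeSet := by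
  set mk := F.connectedComponentMk with hmk
  set T := F ⊔ fromEdgeSet (f '' τ.edgeSet) with hT
  have hno_diag : ∀ e ∈ f '' τ.edgeSet, ¬e.IsDiag := by
    rintro e ⟨ε, hε, rfl⟩ hd
    have : ε.IsDiag := (hf ε hε).2 ▸ map_isDiag mk hd
    exact τ.not_isDiag_of_mem_edgeSet hε this
  have hTedge : T.edgeSet = F.edgeSet ∪ f '' τ.edgeSet := by
    rw [hT, edgeSet_sup, edgeSet_fromEdgeSet]
    congr 1
    ext e
    simp only [Set.mem_diff, Set.mem_setOf_eq, and_iff_left_iff_imp]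
    exact fun he => hno_diag e he
  have hdisj : Disjoint F.edgeSet (f '' τ.edgeSet) := by
    rw [Set.disjoint_right]
    rintro e ⟨ε, hε, rfl⟩ heF
    have hd : (Sym2.map mk (f ε)).IsDiag := by
      generalize hfe : f ε = e at heF ⊢
      induction e using Sym2.ind with
      | _ x y =>
        rw [Sym2.map_pair_eq, Sym2.mk_isDiag_iff]
        exact ConnectedComponent.connectedComponentMk_eq_of_adj ((mem_edgeSet (G := F)).mp heF)
    rw [(hf ε hε).2] at hd
    exact τ.not_isDiag_of_mem_edgeSet hε hd
  have hFT : F ≤ T := le_sup_left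
  have hTG : T ≤ G := by
    rw [hT]
    refine sup_le hFG ?_
    have : f '' τ.edgeSet ⊆ G.edgeSet := by
      rintro e ⟨ε, hε, rfl⟩; exact (hf ε hε).1
    calc fromEdgeSet (f '' τ.edgeSet) ≤ fromEdgeSet G.edgeSet := fromEdgeSet_mono this
      _ = G := fromEdgeSet_edgeSet G
  have hconn : T.Connected := by
    rw [connected_iff]
    refine ⟨?_, hG.nonempty⟩
    intro x y
    refine lift_reachable (τ := τ) hFT ?_ (hτ.isConnected.preconnected (mk x) (mk y)) rfl rfl
    intro c c' hcc
    have hε : s(c, c') ∈ τ.edgeSet := hcc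
    obtain ⟨hG', hmap⟩ := hf _ hε
    have hTadj : ∀ u v : V, f s(c,c') = s(u,v) → T.Adj u v := by
      intro u v huv
      have : s(u, v) ∈ T.edgeSet := by
        rw [hTedge]
        exact Or.inr ⟨s(c,c'), hε, huv⟩
      exact this
    obtain ⟨u, v, hfe⟩ : ∃ u v, f s(c,c') = s(u, v) := by
      induction f s(c,c') using Sym2.ind with
      | _ u v => exact ⟨u, v, rfl⟩
    rw [hfe, Sym2.map_pair_eq, Sym2.eq_iff] at hmap
    rcases hmap with ⟨hu, hv⟩ | ⟨hu, hv⟩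
    · exact ⟨u, v, hTadj u v hfe, hu, hv⟩
    · exact ⟨v, u, (hTadj u v hfe).symm, hv, hu⟩
  have hinj : Set.InjOn f τ.edgeSet := by
    intro e1 h1 e2 h2 he
    rw [← (hf e1 h1).2, ← (hf e2 h2).2, he]
  have hcount : T.edgeSet.ncard = F.edgeSet.ncard + τ.edgeSet.ncard := by
    rw [hTedge, Set.ncard_union_eq hdisj (F.edgeSet.toFinite) ((f '' τ.edgeSet).toFinite),
      Set.ncard_image_of_injOn hinj]
  have e1 := acyclic_card hF
  have e2 := acyclic_card hτ.IsAcyclic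
  rw [card_cc_connected hτ.isConnected] at e2
  have htree : T.IsTree := by
    refine isTree_of_connected_of_ncard_le hconn ?_
    omega
  refine ⟨hTG, htree, hFT, ?_⟩
  rw [hTedge, Set.union_diff_cancel_left (Set.disjoint_iff.mp hdisj)]

lemma diff_card [Fintype V] {F T : SimpleGraph V} (hF : F.IsAcyclic) (hT : T.IsTree)
    (hFT : F ≤ T) :
    (T.edgeSet \ F.edgeSet).ncard + 1 = Nat.card F.ConnectedComponent := by
  have e1 := acyclic_card hF
  have e2 := acyclic_card hT.IsAcyclic
  rw [card_cc_connected hT.isConnected] at e2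
  have e3 : (T.edgeSet \ F.edgeSet).ncard = T.edgeSet.ncard - F.edgeSet.ncard :=
    Set.ncard_diff (edgeSet_mono hFT)
  have e4 : F.edgeSet.ncard ≤ T.edgeSet.ncard :=
    Set.ncard_le_ncard (edgeSet_mono hFT) (T.edgeSet.toFinite)
  omega

lemma tau_card [Fintype V] {F : SimpleGraph V} {τ : SimpleGraph F.ConnectedComponent}
    (hτ : τ.IsTree) : τ.edgeSet.ncard + 1 = Nat.card F.ConnectedComponent := by
  have e2 := acyclic_card hτ.IsAcyclic
  rw [card_cc_connected hτ.isConnected] at e2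
  omega

lemma quotient_tree [Fintype V] {G F : SimpleGraph V} (hF : F.IsAcyclic)
    {T : SimpleGraph V} (hTG : T ≤ G) (hT : T.IsTree) (hFT : F ≤ T) :
    fromEdgeSet (Sym2.map F.connectedComponentMk '' (T.edgeSet \ F.edgeSet))
        ≤ structureGraph G F ∧
    (fromEdgeSet (Sym2.map F.connectedComponentMk '' (T.edgeSet \ F.edgeSet))).IsTree ∧
    (fromEdgeSet (Sym2.map F.connectedComponentMk '' (T.edgeSet \ F.edgeSet))).edgeSet
      = Sym2.map F.connectedComponentMk '' (T.edgeSet \ F.edgeSet) := by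
  set mk := F.connectedComponentMk with hmk
  set D := T.edgeSet \ F.edgeSet with hD
  set I := Sym2.map mk '' D with hI
  set Q := fromEdgeSet I with hQ
  have key : ∀ x y : V, s(x, y) ∈ D → mk x ≠ mk y := by
    intro x y hxyD heq
    have hadj : T.Adj x y := hxyD.1
    exact hxyD.2 (adj_mem_of_reachable hT.IsAcyclic hFT hadj (ConnectedComponent.exact heq))
  have hnd : ∀ e ∈ D, ¬(Sym2.map mk e).IsDiag := by
    intro e
    induction e using Sym2.ind with
    | _ x y =>
      intro he
      rw [Sym2.map_pair_eq, Sym2.mk_isDiag_iff]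
      exact key x y he
  have hQe : Q.edgeSet = I := by
    rw [hQ, edgeSet_fromEdgeSet]
    ext ε
    simp only [Set.mem_diff, Set.mem_setOf_eq, and_iff_left_iff_imp]
    rintro ⟨e, he, rfl⟩
    exact hnd e he
  have hQS : Q ≤ structureGraph G F := by
    intro c c' hadj
    rw [hQ, fromEdgeSet_adj] at hadj
    obtain ⟨⟨e, heD, hemap⟩, hne⟩ := hadj
    obtain ⟨x, y, rfl⟩ : ∃ x y, e = s(x, y) := Sym2.ind (fun a b => ⟨a, b, rfl⟩) e
    rw [Sym2.map_pair_eq, Sym2.eq_iff] at hemap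
    have hGxy : G.Adj x y := hTG heD.1
    rcases hemap with ⟨hx, hy⟩ | ⟨hx, hy⟩
    · exact ⟨hne, x, y, hGxy, hx, hy⟩
    · exact ⟨hne, y, x, hGxy.symm, hy, hx⟩
  have hQconn : Q.Connected := by
    have hNV : Nonempty V := hT.isConnected.nonempty
    rw [connected_iff]
    refine ⟨?_, ⟨mk (Classical.arbitrary V)⟩⟩
    intro c c'
    refine ConnectedComponent.ind₂ (fun x y => ?_) c c'
    refine quot_reachable ?_ (hT.isConnected.preconnected x y)
    intro u v huv
    by_cases hFe : s(u, v) ∈ F.edgeSet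
    · exact Or.inl (ConnectedComponent.connectedComponentMk_eq_of_adj
        ((mem_edgeSet (G := F)).mp hFe))
    · refine Or.inr ?_
      rw [hQ, fromEdgeSet_adj]
      exact ⟨⟨s(u, v), ⟨huv, hFe⟩, Sym2.map_pair_eq ..⟩, key u v ⟨huv, hFe⟩⟩
  have hQtree : Q.IsTree := by
    refine isTree_of_connected_of_ncard_le hQconn ?_
    have h1 : Q.edgeSet.ncard ≤ D.ncard := hQe ▸ Set.ncard_image_le (D.toFinite)
    have h2 := diff_card hF hT hFT
    exact le_trans (Nat.succ_le_succ h1) (le_of_eq h2)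
  exact ⟨hQS, hQtree, hQe⟩

lemma count_trees [Fintype V] {G F : SimpleGraph V} (hG : G.Connected) (hFG : F ≤ G)
    (hF : F.IsAcyclic) {τ : SimpleGraph F.ConnectedComponent}
    (hτS : τ ≤ structureGraph G F) (hτ : τ.IsTree) :
    {T : SimpleGraph V | T ≤ G ∧ T.IsTree ∧ F ≤ T ∧
        Sym2.map F.connectedComponentMk '' (T.edgeSet \ F.edgeSet) = τ.edgeSet}.ncard
      = ∏ ε ∈ τ.edgeFinset, structureWeight G F ε := by
  classical
  haveI : Nonempty V := hG.nonempty
  haveI : Nonempty (Sym2 V) := ⟨s(Classical.arbitrary V, Classical.arbitrary V)⟩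
  have hexu : ∀ T : SimpleGraph V, T ≤ G → T.IsTree → F ≤ T →
      Sym2.map F.connectedComponentMk '' (T.edgeSet \ F.edgeSet) = τ.edgeSet →
      ∀ ε ∈ τ.edgeSet, ∃! e, e ∈ T.edgeSet \ F.edgeSet ∧ Sym2.map F.connectedComponentMk e = ε := by
    intro T hTG hT hFT himg ε hε
    have hcard1 := diff_card hF hT hFT
    have hcard2 := tau_card hτ
    have hinj : Set.InjOn (Sym2.map F.connectedComponentMk) (T.edgeSet \ F.edgeSet) := by
      apply injOn_of_ncard_image ((T.edgeSet \ F.edgeSet).toFinite)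
      rw [himg]
      omega
    rw [← himg] at hε
    obtain ⟨e, heD, hemap⟩ := hε
    exact ⟨e, ⟨heD, hemap⟩, fun e' he' => hinj he'.1 heD (he'.2.trans hemap.symm)⟩
  set Fib : Sym2 F.ConnectedComponent → Type _ :=
    fun ε => {e : Sym2 V // e ∈ G.edgeSet ∧ Sym2.map F.connectedComponentMk e = ε} with hFib
  set ext : (∀ ε : τ.edgeFinset, Fib ε) → Sym2 F.ConnectedComponent → Sym2 V := fun g ε =>
    if h : ε ∈ τ.edgeSet then (g ⟨ε, mem_edgeFinset.mpr h⟩).1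
    else Classical.arbitrary _ with hext_def
  have hext : ∀ g, ∀ ε ∈ τ.edgeSet,
      ext g ε ∈ G.edgeSet ∧ Sym2.map F.connectedComponentMk (ext g ε) = ε := by
    intro g ε hε
    simp only [hext_def, dif_pos hε]
    exact (g ⟨ε, mem_edgeFinset.mpr hε⟩).2
  have hext_val : ∀ g (ε : τ.edgeFinset), ext g (ε : Sym2 F.ConnectedComponent) = (g ε).1 := by
    intro g ε
    have hε : (ε : Sym2 F.ConnectedComponent) ∈ τ.edgeSet := mem_edgeFinset.mp ε.2
    simp only [hext_def, dif_pos hε]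
  let S := {T : SimpleGraph V | T ≤ G ∧ T.IsTree ∧ F ≤ T ∧
        Sym2.map F.connectedComponentMk '' (T.edgeSet \ F.edgeSet) = τ.edgeSet}
  let Ψ : (∀ ε : τ.edgeFinset, Fib ε) → ↥S := fun g =>
    ⟨F ⊔ fromEdgeSet (ext g '' τ.edgeSet), by
      obtain ⟨h1, h2, h3, h4⟩ := build_tree hG hFG hF hτ (ext g) (hext g)
      refine ⟨h1, h2, h3, ?_⟩
      rw [h4, Set.image_image, Set.image_congr (fun ε hε => (hext g ε hε).2), Set.image_id']⟩
  have hΨval : ∀ g, (Ψ g : SimpleGraph V) = F ⊔ fromEdgeSet (ext g '' τ.edgeSet) :=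
    fun g => rfl
  have hbij : Function.Bijective Ψ := by
    constructor
    · intro g1 g2 hg
      funext ε
      have hε : (ε : Sym2 F.ConnectedComponent) ∈ τ.edgeSet := mem_edgeFinset.mp ε.2
      obtain ⟨h1a, h2a, h3a, h4a⟩ := build_tree hG hFG hF hτ (ext g1) (hext g1)
      obtain ⟨h1b, h2b, h3b, h4b⟩ := build_tree hG hFG hF hτ (ext g2) (hext g2)
      have hTeq : F ⊔ fromEdgeSet (ext g1 '' τ.edgeSet) = F ⊔ fromEdgeSet (ext g2 '' τ.edgeSet) :=
        congrArg Subtype.val hg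
      have himg1 : Sym2.map F.connectedComponentMk ''
          ((F ⊔ fromEdgeSet (ext g1 '' τ.edgeSet)).edgeSet \ F.edgeSet) = τ.edgeSet :=
        (Ψ g1).2.2.2.2
      obtain ⟨e0, -, hu2⟩ := hexu _ h1a h2a h3a himg1 _ hε
      have hm1 : (g1 ε).1 ∈ (F ⊔ fromEdgeSet (ext g1 '' τ.edgeSet)).edgeSet \ F.edgeSet := by
        rw [h4a]
        exact ⟨_, hε, (hext_val g1 ε).symm ▸ rfl⟩
      have hm2 : (g2 ε).1 ∈ (F ⊔ fromEdgeSet (ext g1 '' τ.edgeSet)).edgeSet \ F.edgeSet := by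
        rw [hTeq, h4b]
        exact ⟨_, hε, (hext_val g2 ε).symm ▸ rfl⟩
      have e1 := hu2 (g1 ε).1 ⟨hm1, (g1 ε).2.2⟩
      have e2 := hu2 (g2 ε).1 ⟨hm2, (g2 ε).2.2⟩
      exact Subtype.ext (e1.trans e2.symm)
    · rintro ⟨T, hTG, hT, hFT, himg⟩
      have hx : ∀ ε : τ.edgeFinset, ∃! e, e ∈ T.edgeSet \ F.edgeSet ∧
          Sym2.map F.connectedComponentMk e = (ε : Sym2 F.ConnectedComponent) :=
        fun ε => hexu T hTG hT hFT himg _ (mem_edgeFinset.mp ε.2)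
      let g : ∀ ε : τ.edgeFinset, Fib ε := fun ε =>
        ⟨(hx ε).choose, edgeSet_mono hTG (hx ε).choose_spec.1.1.1, (hx ε).choose_spec.1.2⟩
      refine ⟨g, Subtype.ext ?_⟩
      rw [hΨval]
      have himg2 : ext g '' τ.edgeSet = T.edgeSet \ F.edgeSet := by
        apply Set.Subset.antisymm
        · rintro e ⟨ε, hε, rfl⟩
          rw [show ext g ε = (g ⟨ε, mem_edgeFinset.mpr hε⟩).1 from by
            simp only [hext_def, dif_pos hε]]
          exact (hx ⟨ε, mem_edgeFinset.mpr hε⟩).choose_spec.1.1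
        · intro e heD
          have hεmem : Sym2.map F.connectedComponentMk e ∈ τ.edgeSet :=
            himg ▸ Set.mem_image_of_mem _ heD
          refine ⟨Sym2.map F.connectedComponentMk e, hεmem, ?_⟩
          rw [show ext g (Sym2.map F.connectedComponentMk e)
              = (g ⟨_, mem_edgeFinset.mpr hεmem⟩).1 from by
            simp only [hext_def, dif_pos hεmem]]
          exact ((hx ⟨_, mem_edgeFinset.mpr hεmem⟩).choose_spec.2 e ⟨heD, rfl⟩).symm
      rw [himg2, tree_ext hFT]
  have hfib : ∀ ε, Nat.card (Fib ε) = structureWeight G F ε := by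
    intro ε
    rw [structureWeight, ← Nat.card_coe_set_eq]
    rfl
  calc S.ncard = Nat.card ↥S := (Nat.card_coe_set_eq S).symm
    _ = Nat.card (∀ ε : τ.edgeFinset, Fib ε) := (Nat.card_eq_of_bijective Ψ hbij).symm
    _ = ∏ ε : τ.edgeFinset, Nat.card (Fib (ε : Sym2 F.ConnectedComponent)) := Nat.card_pi
    _ = ∏ ε : τ.edgeFinset, structureWeight G F (ε : Sym2 F.ConnectedComponent) := by
        exact Finset.prod_congr rfl (fun ε _ => hfib _)
    _ = ∏ ε ∈ τ.edgeFinset, structureWeight G F ε := Finset.prod_coe_sort _ _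

lemma partition [Fintype V] {G F : SimpleGraph V} (hF : F.IsAcyclic) :
    {T : SimpleGraph V | T ≤ G ∧ T.IsTree ∧ F ≤ T}.ncard
      = ∑ τ' ∈ Finset.univ.filter
          (fun τ' : SimpleGraph F.ConnectedComponent =>
            τ' ≤ structureGraph G F ∧ τ'.IsTree),
          {T : SimpleGraph V | T ≤ G ∧ T.IsTree ∧ F ≤ T ∧
            Sym2.map F.connectedComponentMk '' (T.edgeSet \ F.edgeSet) = τ'.edgeSet}.ncard := by
  classical
  rw [Set.ncard_eq_toFinset_card']
  rw [Finset.card_eq_sum_card_fiberwise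
    (f := fun T : SimpleGraph V =>
      fromEdgeSet (Sym2.map F.connectedComponentMk '' (T.edgeSet \ F.edgeSet)))
    (t := Finset.univ.filter (fun τ' : SimpleGraph F.ConnectedComponent =>
            τ' ≤ structureGraph G F ∧ τ'.IsTree)) ?_]
  · apply Finset.sum_congr rfl
    intro τ' hτ'
    rw [Set.ncard_eq_toFinset_card']
    congr 1
    ext T
    simp only [Finset.mem_filter, Set.mem_toFinset, Set.mem_setOf_eq]
    constructor
    · rintro ⟨⟨hTG, hT, hFT⟩, hQ⟩
      refine ⟨hTG, hT, hFT, ?_⟩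
      rw [← hQ]
      exact ((quotient_tree hF hTG hT hFT).2.2).symm ▸ rfl
    · rintro ⟨hTG, hT, hFT, himg⟩
      refine ⟨⟨hTG, hT, hFT⟩, ?_⟩
      rw [himg, fromEdgeSet_edgeSet]
  · intro T hT
    rw [Finset.mem_coe, Set.mem_toFinset] at hT
    obtain ⟨hTG, hTtree, hFT⟩ := hT
    obtain ⟨h1, h2, -⟩ := quotient_tree hF hTG hTtree hFT
    exact Finset.mem_filter.mpr ⟨Finset.mem_univ _, h1, h2⟩


end Auxiliary

/-- Sample a uniform spanning tree `T` of `G` conditioned to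
contain the spanning forest `F`.  Then the image in the structure graph `S(F)`
of the set of added edges `T \ F` is distributed as the weighted spanning tree
of `S(F)`: the probability of obtaining a given spanning tree `τ` of `S(F)` is
the product of the weights of the edges of `τ` divided by the sum of these
products over all spanning trees of `S(F)`. -/
theorem conditioned_ust_induces_weighted_spanning_tree {V : Type*} [Fintype V]
    (G : SimpleGraph V) (hG : G.Connected)
    (F : SimpleGraph V) (hFG : F ≤ G) (hF : F.IsAcyclic)
    (hcond : {T : SimpleGraph V | T ≤ G ∧ T.IsTree ∧ F ≤ T}.Nonempty)
    (τ : SimpleGraph F.ConnectedComponent)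
    (hτS : τ ≤ structureGraph G F) (hτ : τ.IsTree) :
    ({T : SimpleGraph V | T ≤ G ∧ T.IsTree ∧ F ≤ T ∧
        Sym2.map F.connectedComponentMk '' (T.edgeSet \ F.edgeSet)
          = τ.edgeSet}.ncard : ℝ) /
      ({T : SimpleGraph V | T ≤ G ∧ T.IsTree ∧ F ≤ T}.ncard : ℝ) =
    (∏ ε ∈ τ.edgeFinset, (structureWeight G F ε : ℝ)) /
      ∑ τ' ∈ Finset.univ.filter
          (fun τ' : SimpleGraph F.ConnectedComponent =>
            τ' ≤ structureGraph G F ∧ τ'.IsTree),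
        ∏ ε ∈ τ'.edgeFinset, (structureWeight G F ε : ℝ) := by
  rw [count_trees hG hFG hF hτS hτ, partition hF]
  congr 1
  · rw [Nat.cast_prod]
  · rw [Nat.cast_sum]
    apply Finset.sum_congr rfl
    intro τ' hτ'
    obtain ⟨-, h1, h2⟩ := Finset.mem_filter.mp hτ'
    rw [count_trees hG hFG hF h1 h2, Nat.cast_prod]
end
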